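/- arXiv:2104.02563 — 5 statements merged into one kernel-verified Lean document; each statement's English description precedes it below -/
import Mathlib

section
/- Let n ≥ 1 and let IP_n : ((Fin n → Bool) × (Fin n → Bool)) → Bool be the inner product function IP_n(x, y) = XOR over i ∈ Fin n of (x_i AND y_i). Then every combinatorial rectangle R = A × B, where A and B are sets of assignments Fin n → Bool, that is monochromatic with respect to IP_n has size |A| · |B| ≤ 2^n. -/
/-- The inner product function `IP n (x, y) = ⊕_{i ∈ Fin n} (x i && y i)`. -/
def IP (n : ℕ) (p : (Fin n → Bool) × (Fin n → Bool)) : Bool :=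
  decide (Odd ((Finset.univ.filter fun i : Fin n => (p.1 i && p.2 i) = true).card))

/-!
Identify `Fin n → Bool` with `𝔽₂ⁿ`, so that `IP n` becomes the dot product. If `x ⬝ᵥ y = c` on
`A × B`, then for fixed `x₀ ∈ A`, `y₀ ∈ B` the differences `x - x₀` and `y - y₀` are orthogonal,
so their spans `S`, `T` satisfy `dim S + dim T ≤ n`. Hence `|A| · |B| ≤ |S| · |T| ≤ 2 ^ n`.
-/

open Module Submodule Matrix

section DotProduct

variable {K ι : Type*} [Field K] [Fintype ι]

theorem finrank_span_add_finrank_span_le_of_dotProduct_eq_zero {s t : Set (ι → K)}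
    (h : ∀ x ∈ s, ∀ y ∈ t, x ⬝ᵥ y = 0) :
    finrank K (span K s) + finrank K (span K t) ≤ Fintype.card ι := by
  classical
  let e := dotProductEquiv K ι
  have horth : (span K t).map e.toLinearMap ≤ (span K s).dualAnnihilator := by
    rw [map_span, span_le]
    rintro _ ⟨y, hy, rfl⟩
    rw [SetLike.mem_coe, mem_dualAnnihilator]
    suffices span K s ≤ LinearMap.ker (e y) from fun x hx => this hx
    rw [span_le]
    intro x hx
    simpa [e, dotProduct_comm] using h x hx y hy
  have hdual := Subspace.finrank_add_finrank_dualAnnihilator_eq (span K s)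
  have hmono := finrank_mono horth
  rw [LinearEquiv.finrank_map_eq] at hmono
  rw [finrank_fintype_fun_eq_card] at hdual
  omega

variable [Finite K]

theorem ncard_le_card_pow_finrank_span {V : Type*} [AddCommGroup V] [Module K V]
    [Module.Finite K V] (s : Set V) :
    s.ncard ≤ Nat.card K ^ finrank K (span K s) := by
  have : Finite V := Module.finite_of_finite K
  rw [← Module.natCard_eq_pow_finrank, ← SetLike.coe_sort_coe, Nat.card_coe_set_eq]
  exact Set.ncard_le_ncard subset_span (Set.toFinite _)

theorem ncard_mul_ncard_le_of_dotProduct_eq {A B : Set (ι → K)} {c : K}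
    (h : ∀ x ∈ A, ∀ y ∈ B, x ⬝ᵥ y = c) :
    A.ncard * B.ncard ≤ Nat.card K ^ Fintype.card ι := by
  rcases A.eq_empty_or_nonempty with rfl | ⟨x₀, hx₀⟩
  · simp
  rcases B.eq_empty_or_nonempty with rfl | ⟨y₀, hy₀⟩
  · simp
  set s := (· - x₀) '' A
  set t := (· - y₀) '' B
  have horth : ∀ x ∈ s, ∀ y ∈ t, x ⬝ᵥ y = 0 := by
    rintro _ ⟨x, hx, rfl⟩ _ ⟨y, hy, rfl⟩
    simp only [sub_dotProduct, dotProduct_sub, h x hx y hy, h x hx y₀ hy₀, h x₀ hx₀ y hy,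
      h x₀ hx₀ y₀ hy₀, sub_self]
  have hs : A.ncard = s.ncard := (Set.ncard_image_of_injective A sub_left_injective).symm
  have ht : B.ncard = t.ncard := (Set.ncard_image_of_injective B sub_left_injective).symm
  calc A.ncard * B.ncard
      ≤ Nat.card K ^ finrank K (span K s) * Nat.card K ^ finrank K (span K t) := by
        rw [hs, ht]
        exact Nat.mul_le_mul (ncard_le_card_pow_finrank_span s) (ncard_le_card_pow_finrank_span t)
    _ = Nat.card K ^ (finrank K (span K s) + finrank K (span K t)) := (pow_add ..).symm
    _ ≤ Nat.card K ^ Fintype.card ι :=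
        Nat.pow_le_pow_right Nat.card_pos
          (finrank_span_add_finrank_span_le_of_dotProduct_eq_zero horth)

end DotProduct

def boolVecToZModTwo {n : ℕ} (x : Fin n → Bool) : Fin n → ZMod 2 := fun i => (x i).toNat

theorem boolVecToZModTwo_injective {n : ℕ} : Function.Injective (boolVecToZModTwo (n := n)) :=
  Function.Injective.comp_left (by decide : Function.Injective fun b : Bool => (b.toNat : ZMod 2))

theorem natCast_zmod_two_eq_toNat_decide_odd (k : ℕ) :
    (k : ZMod 2) = (decide (Odd k)).toNat := by
  rcases Nat.even_or_odd k with hk | hk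
  · simp [(ZMod.natCast_eq_zero_iff_even).mpr hk, Nat.not_odd_iff_even.mpr hk]
  · simp [(ZMod.natCast_eq_one_iff_odd).mpr hk, hk]

theorem boolVecToZModTwo_dotProduct {n : ℕ} (x y : Fin n → Bool) :
    boolVecToZModTwo x ⬝ᵥ boolVecToZModTwo y = (IP n (x, y)).toNat := by
  rw [IP, ← natCast_zmod_two_eq_toNat_decide_odd, Finset.natCast_card_filter]
  have hmul : ∀ a b : Bool, (a.toNat : ZMod 2) * b.toNat = if (a && b) = true then 1 else 0 := by
    decide
  exact Finset.sum_congr rfl fun i _ => hmul (x i) (y i)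

theorem ip_monochromatic_rectangle_le_general (n : ℕ)
    (A B : Set (Fin n → Bool)) (c : Bool)
    (hmono : ∀ x ∈ A, ∀ y ∈ B, IP n (x, y) = c) :
    A.ncard * B.ncard ≤ 2 ^ n := by
  have hdot : ∀ x ∈ boolVecToZModTwo '' A, ∀ y ∈ boolVecToZModTwo '' B,
      x ⬝ᵥ y = (c.toNat : ZMod 2) := by
    rintro _ ⟨x, hx, rfl⟩ _ ⟨y, hy, rfl⟩
    rw [boolVecToZModTwo_dotProduct, hmono x hx y hy]
  have hbound := ncard_mul_ncard_le_of_dotProduct_eq hdot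
  rwa [Set.ncard_image_of_injective _ boolVecToZModTwo_injective,
    Set.ncard_image_of_injective _ boolVecToZModTwo_injective, Nat.card_zmod,
    Fintype.card_fin] at hbound

/-- Every combinatorial rectangle `A × B` that is monochromatic with respect to the
inner product function `IP n` has size `|A| · |B| ≤ 2 ^ n`. -/
theorem ip_monochromatic_rectangle_le (n : ℕ) (hn : 1 ≤ n)
    (A B : Set (Fin n → Bool)) (c : Bool)
    (hmono : ∀ x ∈ A, ∀ y ∈ B, IP n (x, y) = c) :
    A.ncard * B.ncard ≤ 2 ^ n :=
  ip_monochromatic_rectangle_le_general n A B c hmono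
end

section
/- Let n ≥ 1 and for each i ∈ Fin n let g_i : Bool × Bool → Bool be one of the four functions (a, b) ↦ a AND b, (a, b) ↦ (NOT a) AND b, (a, b) ↦ a AND (NOT b), or (a, b) ↦ a OR b. Define F(x, y) = XOR over i ∈ Fin n of g_i(x_i, y_i) for x, y : Fin n → Bool. Then every combinatorial rectangle A × B with partition ({x_1, …, x_n}, {y_1, …, y_n}) that is monochromatic with respect to F has size |A| · |B| ≤ 2^n. -/
/-- `xorSum n h = ⊕_{i ∈ Fin n} h i`, the XOR (parity) of the values `h i`. -/
def xorSum (n : ℕ) (h : Fin n → Bool) : Bool :=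
  decide (Odd ((Finset.univ.filter fun i : Fin n => h i = true).card))

/-- sign of a boolean: `-1` for `true`, `1` for `false`. -/
def sg (b : Bool) : ℤ := if b then -1 else 1

lemma sg_sq (b : Bool) : sg b * sg b = 1 := by cases b <;> rfl

lemma sg_xorSum (n : ℕ) (h : Fin n → Bool) :
    sg (xorSum n h) = ∏ i, sg (h i) := by
  unfold xorSum sg
  rw [Finset.prod_ite, Finset.prod_const, Finset.prod_const, one_pow, mul_one]
  by_cases hodd : Odd ((Finset.univ.filter fun i : Fin n => h i = true).card)
  · simp [hodd, hodd.neg_one_pow]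
  · simp [hodd, (Nat.not_odd_iff_even.mp hodd).neg_one_pow]

lemma coord_sum (gi : Bool → Bool → Bool)
    (hgi : gi = (fun a b => a && b) ∨ gi = (fun a b => !a && b) ∨
      gi = (fun a b => a && !b) ∨ gi = (fun a b => a || b)) (u v : Bool) :
    ∑ a : Bool, sg (gi a u) * sg (gi a v) = if u = v then 2 else 0 := by
  rcases hgi with h | h | h | h <;> subst h <;> revert u v <;> decide

lemma ortho (n : ℕ) (g : Fin n → Bool → Bool → Bool)
    (hg : ∀ i, g i = (fun a b => a && b) ∨ g i = (fun a b => !a && b) ∨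
      g i = (fun a b => a && !b) ∨ g i = (fun a b => a || b))
    (y y' : Fin n → Bool) :
    ∑ x : Fin n → Bool, ((∏ i, sg (g i (x i) (y i))) * ∏ i, sg (g i (x i) (y' i)))
      = if y = y' then 2 ^ n else 0 := by
  have h1 : ∑ x : Fin n → Bool, ((∏ i, sg (g i (x i) (y i))) * ∏ i, sg (g i (x i) (y' i)))
      = ∏ i, ∑ a : Bool, sg (g i a (y i)) * sg (g i a (y' i)) := by
    rw [Finset.prod_univ_sum, Fintype.piFinset_univ]
    simp_rw [← Finset.prod_mul_distrib]
  rw [h1]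
  by_cases hyy : y = y'
  · subst hyy
    simp only [if_pos rfl]
    calc ∏ i, ∑ a : Bool, sg (g i a (y i)) * sg (g i a (y i))
        = ∏ _i : Fin n, (2 : ℤ) := by
          apply Finset.prod_congr rfl
          intro i _
          rw [coord_sum (g i) (hg i), if_pos rfl]
      _ = 2 ^ n := by simp
  · rw [if_neg hyy]
    obtain ⟨i, hi⟩ : ∃ i, y i ≠ y' i := by
      by_contra h; push_neg at h; exact hyy (funext h)
    apply Finset.prod_eq_zero (Finset.mem_univ i)
    rw [coord_sum (g i) (hg i), if_neg hi]

/-- Let `F(x, y) = ⊕_{i ∈ Fin n} g i (x i) (y i)` where each `g i` is one of the four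
functions `a ∧ b`, `¬a ∧ b`, `a ∧ ¬b`, `a ∨ b`.  Then every combinatorial rectangle
`A × B` (with partition (x-variables, y-variables)) that is monochromatic with respect
to `F` has size `|A| · |B| ≤ 2 ^ n`. -/
theorem generalized_ip_monochromatic_rectangle_le (n : ℕ) (hn : 1 ≤ n)
    (g : Fin n → Bool → Bool → Bool)
    (hg : ∀ i, g i = (fun a b => a && b) ∨ g i = (fun a b => !a && b) ∨
      g i = (fun a b => a && !b) ∨ g i = (fun a b => a || b))
    (A B : Set (Fin n → Bool)) (c : Bool)
    (hmono : ∀ x ∈ A, ∀ y ∈ B, xorSum n (fun i => g i (x i) (y i)) = c) :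
    A.ncard * B.ncard ≤ 2 ^ n := by
  classical
  have hAfin : A.Finite := Set.toFinite A
  have hBfin : B.Finite := Set.toFinite B
  set A' : Finset (Fin n → Bool) := hAfin.toFinset with hA'
  set B' : Finset (Fin n → Bool) := hBfin.toFinset with hB'
  have hcardA : A.ncard = A'.card := (Set.ncard_eq_toFinset_card A hAfin)
  have hcardB : B.ncard = B'.card := (Set.ncard_eq_toFinset_card B hBfin)
  set s : (Fin n → Bool) → (Fin n → Bool) → ℤ := fun x y => ∏ i, sg (g i (x i) (y i)) with hs
  have hmono' : ∀ x ∈ A', ∀ y ∈ B', s x y = sg c := by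
    intro x hx y hy
    show (∏ i, sg (g i (x i) (y i))) = sg c
    rw [← sg_xorSum n (fun i => g i (x i) (y i)),
      hmono x (hAfin.mem_toFinset.mp hx) y (hBfin.mem_toFinset.mp hy)]
  set a : ℕ := A'.card
  set b : ℕ := B'.card
  -- total sum over the rectangle
  have hT : ∑ x ∈ A', ∑ y ∈ B', s x y = (a * b : ℤ) * sg c := by
    rw [Finset.sum_congr rfl fun x hx =>
      Finset.sum_congr rfl fun y hy => hmono' x hx y hy]
    simp only [Finset.sum_const, nsmul_eq_mul]
    push_cast
    ring
  have hTsq : (∑ x ∈ A', ∑ y ∈ B', s x y) ^ 2 = ((a : ℤ) * b) ^ 2 := by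
    rw [hT, mul_pow]
    cases c <;> simp [sg]
  -- Cauchy–Schwarz
  have hCS : (∑ x ∈ A', ∑ y ∈ B', s x y) ^ 2
      ≤ (a : ℤ) * ∑ x ∈ A', (∑ y ∈ B', s x y) ^ 2 :=
    sq_sum_le_card_mul_sum_sq
  have hext : ∑ x ∈ A', (∑ y ∈ B', s x y) ^ 2
      ≤ ∑ x : Fin n → Bool, (∑ y ∈ B', s x y) ^ 2 :=
    Finset.sum_le_sum_of_subset_of_nonneg (Finset.subset_univ _)
      (fun x _ _ => sq_nonneg _)
  have hfull : ∑ x : Fin n → Bool, (∑ y ∈ B', s x y) ^ 2 = (b : ℤ) * 2 ^ n := by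
    have : ∀ x : Fin n → Bool, (∑ y ∈ B', s x y) ^ 2
        = ∑ y ∈ B', ∑ y' ∈ B', s x y * s x y' := by
      intro x; rw [sq, Finset.sum_mul_sum]
    simp_rw [this]
    rw [Finset.sum_comm]
    have hswap : ∑ y ∈ B', ∑ x : Fin n → Bool, ∑ y' ∈ B', s x y * s x y'
        = ∑ y ∈ B', ∑ y' ∈ B', ∑ x : Fin n → Bool, s x y * s x y' := by
      exact Finset.sum_congr rfl fun y _ => Finset.sum_comm
    rw [hswap]
    have : ∀ y ∈ B', ∑ y' ∈ B', ∑ x : Fin n → Bool, s x y * s x y' = 2 ^ n := by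
      intro y hy
      have h0 : ∀ y' ∈ B', ∑ x : Fin n → Bool, s x y * s x y'
          = if y = y' then (2 : ℤ) ^ n else 0 := fun y' _ => ortho n g hg y y'
      rw [Finset.sum_congr rfl h0, Finset.sum_ite_eq B' y (fun _ => (2:ℤ)^n), if_pos hy]
    rw [Finset.sum_congr rfl this, Finset.sum_const, nsmul_eq_mul]
  have key : ((a : ℤ) * b) ^ 2 ≤ ((a : ℤ) * b) * 2 ^ n := by
    calc ((a : ℤ) * b) ^ 2 = (∑ x ∈ A', ∑ y ∈ B', s x y) ^ 2 := hTsq.symm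
      _ ≤ (a : ℤ) * ∑ x ∈ A', (∑ y ∈ B', s x y) ^ 2 := hCS
      _ ≤ (a : ℤ) * ∑ x : Fin n → Bool, (∑ y ∈ B', s x y) ^ 2 := by
          apply mul_le_mul_of_nonneg_left hext (by positivity)
      _ = (a : ℤ) * ((b : ℤ) * 2 ^ n) := by rw [hfull]
      _ = ((a : ℤ) * b) * 2 ^ n := by ring
  rw [hcardA, hcardB]
  by_cases hab : a * b = 0
  · rw [hab]; positivity
  · have hab' : 0 < ((a : ℤ) * b) := by
      have := Nat.pos_of_ne_zero hab
      exact_mod_cast this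
    have : ((a : ℤ) * b) ≤ 2 ^ n := by
      have := key
      rw [sq] at this
      exact le_of_mul_le_mul_left this hab'
    exact_mod_cast this
end

section
/- Let G = (X, E) be a finite simple graph with n vertices, maximum degree at most Δ, and expansion at least d with d ≤ 1, and let (X_1, X_2) be a b-balanced partition of X with b > d. Then G has an induced matching consisting of at least n·d²·b / (2(Δ² + 1)) edges, each of which has one endpoint in X_1 and one endpoint in X_2. -/
/-- The graph `G` has expansion at least `d`: for every nonempty set `V'` of at most half
the vertices, the open neighborhood `N(V')` satisfies `|N(V')| ≥ d·|V'|`. -/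
def ExpansionAtLeast {V : Type*} [Fintype V] [DecidableEq V] (G : SimpleGraph V)
    [DecidableRel G.Adj] (d : ℝ) : Prop :=
  ∀ V' : Finset V, V'.Nonempty → 2 * V'.card ≤ Fintype.card V →
    d * (V'.card : ℝ) ≤
      (((Finset.univ.filter fun w => w ∉ V' ∧ ∃ v ∈ V', G.Adj v w).card : ℕ) : ℝ)


open Finset

section Aux
variable {V : Type*} [Fintype V] [DecidableEq V] (G : SimpleGraph V) [DecidableRel G.Adj]

def PairIndep (p q : V × V) : Prop :=
  ¬ G.Adj p.1 q.1 ∧ ¬ G.Adj p.1 q.2 ∧ ¬ G.Adj p.2 q.1 ∧ ¬ G.Adj p.2 q.2 ∧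
  p.1 ≠ q.1 ∧ p.1 ≠ q.2 ∧ p.2 ≠ q.1 ∧ p.2 ≠ q.2

lemma pairIndep_symm {p q : V × V} (h : PairIndep G p q) : PairIndep G q p := by
  obtain ⟨h1, h2, h3, h4, h5, h6, h7, h8⟩ := h
  exact ⟨fun a => h1 a.symm, fun a => h3 a.symm, fun a => h2 a.symm, fun a => h4 a.symm,
    h5.symm, h7.symm, h6.symm, h8.symm⟩

lemma touching_card_le (Δ : ℕ) (hdeg : ∀ v, G.degree v ≤ Δ) (X₁ : Finset V)
    (F : Finset (V × V)) (hF : ∀ p ∈ F, G.Adj p.1 p.2 ∧ p.1 ∈ X₁ ∧ p.2 ∉ X₁) (w : V) :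
    (F.filter fun p => p.1 = w ∨ p.2 = w).card ≤ Δ := by
  by_cases hw : w ∈ X₁
  · refine le_trans (Finset.card_le_card_of_injOn Prod.snd ?_ ?_)
      ((G.card_neighborFinset_eq_degree w) ▸ hdeg w)
    · intro p hp
      simp only [mem_coe, mem_filter] at hp ⊢
      obtain ⟨hpF, hor⟩ := hp
      obtain ⟨hadj, hp1, hp2⟩ := hF p hpF
      have h1 : p.1 = w := by
        rcases hor with h | h
        · exact h
        · exact absurd (h ▸ hw) hp2
      rw [SimpleGraph.mem_neighborFinset]
      exact h1 ▸ hadj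
    · intro p hp q hq h
      simp only [coe_filter, Set.mem_setOf_eq] at hp hq
      obtain ⟨hpF, hpor⟩ := hp
      obtain ⟨hqF, hqor⟩ := hq
      have hp1 : p.1 = w := by
        rcases hpor with h' | h'
        · exact h'
        · exact absurd (h' ▸ hw) (hF p hpF).2.2
      have hq1 : q.1 = w := by
        rcases hqor with h' | h'
        · exact h'
        · exact absurd (h' ▸ hw) (hF q hqF).2.2
      exact Prod.ext (hp1.trans hq1.symm) h
  · refine le_trans (Finset.card_le_card_of_injOn Prod.fst ?_ ?_)
      ((G.card_neighborFinset_eq_degree w) ▸ hdeg w)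
    · intro p hp
      simp only [mem_coe, mem_filter] at hp ⊢
      obtain ⟨hpF, hor⟩ := hp
      obtain ⟨hadj, hp1, hp2⟩ := hF p hpF
      have h2 : p.2 = w := by
        rcases hor with h | h
        · exact absurd (h ▸ hp1) hw
        · exact h
      rw [SimpleGraph.mem_neighborFinset]
      exact (h2 ▸ hadj).symm
    · intro p hp q hq h
      simp only [coe_filter, Set.mem_setOf_eq] at hp hq
      obtain ⟨hpF, hpor⟩ := hp
      obtain ⟨hqF, hqor⟩ := hq
      have hp2 : p.2 = w := by
        rcases hpor with h' | h'
        · exact absurd (h' ▸ (hF p hpF).2.1) hw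
        · exact h'
      have hq2 : q.2 = w := by
        rcases hqor with h' | h'
        · exact absurd (h' ▸ (hF q hqF).2.1) hw
        · exact h'
      exact Prod.ext h (hp2.trans hq2.symm)

lemma greedy (Δ : ℕ) (hdeg : ∀ v, G.degree v ≤ Δ) (X₁ : Finset V) :
    ∀ n : ℕ, ∀ F : Finset (V × V), F.card ≤ n →
    (∀ p ∈ F, G.Adj p.1 p.2 ∧ p.1 ∈ X₁ ∧ p.2 ∉ X₁) →
    ∃ L : List (V × V), (∀ p ∈ L, p ∈ F) ∧ L.Pairwise (PairIndep G) ∧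
      F.card ≤ (2 * Δ ^ 2 + 2) * L.length := by
  intro n
  induction n with
  | zero =>
    intro F hc _
    exact ⟨[], by simp, List.Pairwise.nil, by omega⟩
  | succ n ih =>
    intro F hc hF
    rcases F.eq_empty_or_nonempty with rfl | ⟨e, he⟩
    · exact ⟨[], by simp, List.Pairwise.nil, by simp⟩
    · have hadj := (hF e he).1
      set Nuv := G.neighborFinset e.1 ∪ G.neighborFinset e.2 with hNuv
      set C := F.filter (fun p => p.1 ∈ Nuv ∨ p.2 ∈ Nuv) with hC
      have hCF : C ⊆ F := filter_subset _ _
      have heC : e ∈ C := by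
        rw [hC, mem_filter]
        refine ⟨he, Or.inl ?_⟩
        rw [hNuv, mem_union, SimpleGraph.mem_neighborFinset, SimpleGraph.mem_neighborFinset]
        exact Or.inr hadj.symm
      have hCcard : C.card ≤ 2 * Δ ^ 2 := by
        have hsub : C ⊆ Nuv.biUnion (fun w => F.filter fun p => p.1 = w ∨ p.2 = w) := by
          intro p hp
          rw [hC, mem_filter] at hp
          obtain ⟨hpF, hor⟩ := hp
          rw [mem_biUnion]
          rcases hor with h | h
          · exact ⟨p.1, h, by rw [mem_filter]; exact ⟨hpF, Or.inl rfl⟩⟩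
          · exact ⟨p.2, h, by rw [mem_filter]; exact ⟨hpF, Or.inr rfl⟩⟩
        calc C.card ≤ _ := Finset.card_le_card hsub
          _ ≤ ∑ w ∈ Nuv, (F.filter fun p => p.1 = w ∨ p.2 = w).card :=
              Finset.card_biUnion_le
          _ ≤ ∑ _w ∈ Nuv, Δ :=
              Finset.sum_le_sum (fun w _ => touching_card_le G Δ hdeg X₁ F hF w)
          _ = Nuv.card * Δ := by rw [Finset.sum_const, smul_eq_mul]
          _ ≤ (2 * Δ) * Δ := by
              have h1 : Nuv.card ≤ 2 * Δ := by
                calc Nuv.card ≤ (G.neighborFinset e.1).card + (G.neighborFinset e.2).card :=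
                      Finset.card_union_le _ _
                  _ ≤ 2 * Δ := by
                      have := (G.card_neighborFinset_eq_degree e.1) ▸ hdeg e.1
                      have := (G.card_neighborFinset_eq_degree e.2) ▸ hdeg e.2
                      omega
              exact Nat.mul_le_mul_right Δ h1
          _ = 2 * Δ ^ 2 := by ring
      set F' := F \ C with hF'
      have hsub : F' ⊆ F := sdiff_subset
      have hsd : F'.card = F.card - C.card := card_sdiff_of_subset hCF
      have hCle : C.card ≤ F.card := Finset.card_le_card hCF
      have hC1 : 1 ≤ C.card := Finset.card_pos.mpr ⟨e, heC⟩
      have hcard' : F'.card ≤ n := by omega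
      obtain ⟨hL'F, hL'pw, hL'c⟩ :=
        (ih F' hcard' (fun p hp => hF p (hsub hp))).choose_spec
      set L' := (ih F' hcard' (fun p hp => hF p (hsub hp))).choose with hL'
      refine ⟨e :: L', ?_, ?_, ?_⟩
      · intro p hp
        rcases List.mem_cons.mp hp with rfl | hp'
        · exact he
        · exact hsub (hL'F p hp')
      · refine List.pairwise_cons.mpr ⟨fun q hq => ?_, hL'pw⟩
        have hqF' := hL'F q hq
        rw [hF', mem_sdiff] at hqF'
        obtain ⟨hqF, hqC⟩ := hqF'
        have hnot : q.1 ∉ Nuv ∧ q.2 ∉ Nuv := by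
          by_contra hcon
          apply hqC
          rw [hC, mem_filter]
          refine ⟨hqF, ?_⟩
          tauto
        obtain ⟨hq1, hq2⟩ := hnot
        have hmem1 : ∀ x, G.Adj e.1 x → x ∈ Nuv := fun x hx => by
          rw [hNuv, mem_union, SimpleGraph.mem_neighborFinset]; exact Or.inl hx
        have hmem2 : ∀ x, G.Adj e.2 x → x ∈ Nuv := fun x hx => by
          rw [hNuv, mem_union, SimpleGraph.mem_neighborFinset,
            SimpleGraph.mem_neighborFinset]; exact Or.inr hx
        refine ⟨fun h => hq1 (hmem1 _ h), fun h => hq2 (hmem1 _ h),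
          fun h => hq1 (hmem2 _ h), fun h => hq2 (hmem2 _ h),
          fun h => hq1 (h ▸ hmem2 _ hadj.symm), fun h => hq2 (h ▸ hmem2 _ hadj.symm),
          fun h => hq1 (h ▸ hmem1 _ hadj), fun h => hq2 (h ▸ hmem1 _ hadj)⟩
      · rw [List.length_cons, mul_add, mul_one]
        have : F.card = F'.card + C.card := by omega
        omega

end Aux

/-- Let `G` be a graph with `n` vertices, maximum degree at most `Δ`, and expansion at
least `d` with `0 ≤ d ≤ 1`, and let `(X₁, X₁ᶜ)` be a `b`-balanced partition of the
vertices with `b > d`.  Then `G` has an induced matching of at least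
`n·d²·b / (2(Δ² + 1))` edges, each with one endpoint in `X₁` and one in `X₁ᶜ`. -/
theorem expander_induced_crossing_matching {V : Type*} [Fintype V] [DecidableEq V]
    (G : SimpleGraph V) [DecidableRel G.Adj]
    (Δ : ℕ) (d b : ℝ) (hd0 : 0 ≤ d) (hd1 : d ≤ 1) (hdb : d < b)
    (hdeg : ∀ v, G.degree v ≤ Δ)
    (hexp : ExpansionAtLeast G d)
    (X₁ : Finset V)
    (hbal : b * (Fintype.card V : ℝ) ≤ ((min X₁.card X₁ᶜ.card : ℕ) : ℝ)) :
    ∃ m : ℕ,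
      (Fintype.card V : ℝ) * d ^ 2 * b / (2 * ((Δ : ℝ) ^ 2 + 1)) ≤ (m : ℝ) ∧
      ∃ a c : Fin m → V,
        (∀ i, G.Adj (a i) (c i)) ∧
        (∀ i j, i ≠ j → a i ≠ a j ∧ a i ≠ c j ∧ c i ≠ a j ∧ c i ≠ c j) ∧
        (∀ i j, i ≠ j →
          ¬ G.Adj (a i) (a j) ∧ ¬ G.Adj (a i) (c j) ∧
          ¬ G.Adj (c i) (a j) ∧ ¬ G.Adj (c i) (c j)) ∧
        (∀ i, (a i ∈ X₁ ∧ c i ∈ X₁ᶜ) ∨ (a i ∈ X₁ᶜ ∧ c i ∈ X₁)) := by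
  by_cases hn : Fintype.card V = 0
  · refine ⟨0, by simp [hn], Fin.elim0, Fin.elim0, ?_, ?_, ?_, ?_⟩ <;> exact fun i => i.elim0
  · have hb0 : 0 < b := lt_of_le_of_lt hd0 hdb
    have hn1 : (1:ℝ) ≤ Fintype.card V := by
      exact_mod_cast Nat.one_le_iff_ne_zero.mpr hn
    have hminpos : 0 < min X₁.card X₁ᶜ.card := by
      have h1 : (0:ℝ) < b * Fintype.card V := by positivity
      exact_mod_cast lt_of_lt_of_le h1 hbal
    obtain ⟨hX1pos, hX1cpos⟩ := lt_min_iff.mp hminpos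
    have hsum : X₁.card + X₁ᶜ.card = Fintype.card V := Finset.card_add_card_compl X₁
    set F₀ : Finset (V × V) :=
      (Finset.univ ×ˢ Finset.univ).filter
        (fun p => p.1 ∈ X₁ ∧ p.2 ∉ X₁ ∧ G.Adj p.1 p.2) with hF₀def
    have hF₀mem : ∀ p ∈ F₀, G.Adj p.1 p.2 ∧ p.1 ∈ X₁ ∧ p.2 ∉ X₁ := by
      intro p hp
      rw [hF₀def, Finset.mem_filter] at hp
      exact ⟨hp.2.2.2, hp.2.1, hp.2.2.1⟩
    have key : d * (b * Fintype.card V) ≤ (F₀.card : ℝ) := by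
      by_cases hle : X₁.card ≤ X₁ᶜ.card
      · have hmin_eq : min X₁.card X₁ᶜ.card = X₁.card := min_eq_left hle
        have h2 : 2 * X₁.card ≤ Fintype.card V := by omega
        have hex := hexp X₁ (Finset.card_pos.mp hX1pos) h2
        set NS := Finset.univ.filter (fun w => w ∉ X₁ ∧ ∃ v ∈ X₁, G.Adj v w) with hNS
        have hinj : NS.card ≤ F₀.card := by
          apply Finset.card_le_card_of_injOn
            (fun w => (if h : ∃ v ∈ X₁, G.Adj v w then h.choose else w, w))
          · intro w hw
            simp only [Finset.mem_coe] at hw ⊢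
            rw [hNS, Finset.mem_filter] at hw
            obtain ⟨-, hw1, hw2⟩ := hw
            rw [dif_pos hw2]
            obtain ⟨hv1, hv2⟩ := hw2.choose_spec
            rw [hF₀def, Finset.mem_filter]
            exact ⟨Finset.mem_product.mpr ⟨Finset.mem_univ _, Finset.mem_univ _⟩,
              hv1, hw1, hv2⟩
          · intro w _ w' _ h
            exact congrArg Prod.snd h
        calc d * (b * Fintype.card V) ≤ d * X₁.card := by
              have : b * Fintype.card V ≤ (X₁.card : ℝ) := by
                rw [← hmin_eq]; exact_mod_cast hbal
              exact mul_le_mul_of_nonneg_left this hd0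
          _ ≤ (NS.card : ℝ) := hex
          _ ≤ (F₀.card : ℝ) := by exact_mod_cast hinj
      · have hle' : X₁ᶜ.card ≤ X₁.card := le_of_not_ge hle
        have hmin_eq : min X₁.card X₁ᶜ.card = X₁ᶜ.card := min_eq_right hle'
        have h2 : 2 * X₁ᶜ.card ≤ Fintype.card V := by omega
        have hex := hexp X₁ᶜ (Finset.card_pos.mp hX1cpos) h2
        set NS := Finset.univ.filter (fun w => w ∉ X₁ᶜ ∧ ∃ v ∈ X₁ᶜ, G.Adj v w) with hNS
        have hinj : NS.card ≤ F₀.card := by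
          apply Finset.card_le_card_of_injOn
            (fun w => (w, if h : ∃ v ∈ X₁ᶜ, G.Adj v w then h.choose else w))
          · intro w hw
            simp only [Finset.mem_coe] at hw ⊢
            rw [hNS, Finset.mem_filter] at hw
            obtain ⟨-, hw1, hw2⟩ := hw
            rw [dif_pos hw2]
            obtain ⟨hv1, hv2⟩ := hw2.choose_spec
            rw [hF₀def, Finset.mem_filter]
            refine ⟨Finset.mem_product.mpr ⟨Finset.mem_univ _, Finset.mem_univ _⟩,
              ?_, ?_, hv2.symm⟩
            · by_contra hcon
              exact hw1 (Finset.mem_compl.mpr hcon)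
            · exact Finset.mem_compl.mp hv1
          · intro w _ w' _ h
            exact congrArg Prod.fst h
        calc d * (b * Fintype.card V) ≤ d * X₁ᶜ.card := by
              have : b * Fintype.card V ≤ (X₁ᶜ.card : ℝ) := by
                rw [← hmin_eq]; exact_mod_cast hbal
              exact mul_le_mul_of_nonneg_left this hd0
          _ ≤ (NS.card : ℝ) := hex
          _ ≤ (F₀.card : ℝ) := by exact_mod_cast hinj
    obtain ⟨L, hLF, hLpw, hLc⟩ := greedy G Δ hdeg X₁ F₀.card F₀ le_rfl hF₀mem
    have hind : ∀ i j : Fin L.length, i ≠ j → PairIndep G (L.get i) (L.get j) := by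
      intro i j hij
      rcases hij.lt_or_gt with h | h
      · exact List.pairwise_iff_get.mp hLpw i j h
      · exact pairIndep_symm G (List.pairwise_iff_get.mp hLpw j i h)
    have hmemF : ∀ i : Fin L.length, L.get i ∈ F₀ := fun i => hLF _ (L.get_mem i)
    refine ⟨L.length, ?_, fun i => (L.get i).1, fun i => (L.get i).2, ?_, ?_, ?_, ?_⟩
    · have hK : (0:ℝ) < 2 * ((Δ:ℝ) ^ 2 + 1) := by positivity
      rw [div_le_iff₀ hK]
      have h1 : (F₀.card : ℝ) ≤ (L.length : ℝ) * (2 * ((Δ:ℝ) ^ 2 + 1)) := by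
        have : (F₀.card : ℝ) ≤ ((2 * Δ ^ 2 + 2) * L.length : ℕ) := by exact_mod_cast hLc
        push_cast at this
        linarith [this]
      have hd2 : d ^ 2 ≤ d := by nlinarith
      have h2 : (Fintype.card V : ℝ) * d ^ 2 * b ≤ d * (b * Fintype.card V) := by
        calc (Fintype.card V : ℝ) * d ^ 2 * b = d ^ 2 * (b * Fintype.card V) := by ring
          _ ≤ d * (b * Fintype.card V) :=
              mul_le_mul_of_nonneg_right hd2 (mul_nonneg hb0.le (by linarith))
      linarith
    · exact fun i => (hF₀mem _ (hmemF i)).1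
    · exact fun i j hij => (hind i j hij).2.2.2.2
    · exact fun i j hij =>
        ⟨(hind i j hij).1, (hind i j hij).2.1, (hind i j hij).2.2.1, (hind i j hij).2.2.2.1⟩
    · intro i
      obtain ⟨-, h1, h2⟩ := hF₀mem _ (hmemF i)
      exact Or.inl ⟨h1, Finset.mem_compl.mpr h2⟩
end

section
/- Let n ≥ 2 and let f : (Fin n → Bool) → (Fin n → Bool) be a function. If f is a universal winning strategy for EQ'_n, i.e., for every x : Fin n → Bool, every t : Fin n → Bool, and every e : Fin (n−1) → Bool the formula φ_n(x, f(x), t, e) is false, then f is the copy strategy: f(x) = x for all x : Fin n → Bool. -/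
/-- The matrix `φ_n` of the QBF `EQ'_n`, over assignments `x, u, t : Fin n → Bool` and
`e : Fin (n-1) → Bool` (0-indexed: `x_i = x ⟨i-1⟩`, etc.).  It is the conjunction of the
clauses `(x_i ∨ u_i ∨ ¬t_i)` and `(¬x_i ∨ ¬u_i ∨ ¬t_i)` for `1 ≤ i ≤ n`, together with
`(t_1 ∨ e_1)`, `(¬e_{i−1} ∨ t_i ∨ e_i)` for `2 ≤ i ≤ n−1`, and `(¬e_{n−1} ∨ t_n)`. -/
def phiEQ (n : ℕ) (x u t : Fin n → Bool) (e : Fin (n - 1) → Bool) : Prop :=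
  (∀ i : Fin n, ((x i || u i || !t i) && (!x i || !u i || !t i)) = true) ∧
  (∀ _h : 1 ≤ n - 1, (t ⟨0, by omega⟩ || e ⟨0, by omega⟩) = true) ∧
  (∀ j : ℕ, ∀ _hj1 : 1 ≤ j, ∀ _hj2 : j < n - 1,
    (!e ⟨j - 1, by omega⟩ || t ⟨j, by omega⟩ || e ⟨j, by omega⟩) = true) ∧
  (∀ _h : 1 ≤ n - 1, (!e ⟨n - 2, by omega⟩ || t ⟨n - 1, by omega⟩) = true)

/-- If `f` is a universal winning strategy for `EQ'_n`, i.e. `φ_n(x, f(x), t, e)` is false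
for all `x`, `t`, `e`, then `f` is the copy strategy `f(x) = x`. -/
theorem eq_unique_winning_strategy (n : ℕ) (hn : 2 ≤ n)
    (f : (Fin n → Bool) → (Fin n → Bool))
    (hf : ∀ (x t : Fin n → Bool) (e : Fin (n - 1) → Bool), ¬ phiEQ n x (f x) t e) :
    ∀ x : Fin n → Bool, f x = x := by
  intro x
  by_contra h
  have hex : ∃ i : Fin n, f x i ≠ x i := by
    by_contra h'
    push_neg at h'
    exact h (funext h')
  obtain ⟨i, hi⟩ := hex
  apply hf x (fun j => decide (j = i)) (fun j => decide (j.val < i.val))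
  refine ⟨?_, ?_, ?_, ?_⟩
  · intro j
    by_cases hji : j = i
    · subst hji
      cases hx : x j <;> cases hu : f x j <;> simp_all
    · simp [hji]
  · intro _
    have := i.isLt
    simp only [Bool.or_eq_true, decide_eq_true_eq, Fin.ext_iff, Fin.val_mk]
    omega
  · intro j hj1 hj2
    have := i.isLt
    simp only [Bool.or_eq_true, Bool.not_eq_true', decide_eq_true_eq,
      decide_eq_false_iff_not, Fin.ext_iff, Fin.val_mk]
    omega
  · intro _
    have := i.isLt
    simp only [Bool.or_eq_true, Bool.not_eq_true', decide_eq_true_eq,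
      decide_eq_false_iff_not, Fin.ext_iff, Fin.val_mk]
    omega
end

section
/- Let f : (V → Bool) → Bool over a set V of n Boolean variables be computed by a (w, π)-OBDD decision list of length s, i.e., a sequence (L_1, c_1), …, (L_s, c_s) where each L_i : (V → Bool) → Bool is computed by a complete OBDD of width at most w with the common variable order π, each c_i ∈ Bool, L_s is constantly true, and f(τ) = c_i for the least index i with L_i(τ) = true. Let 0 ≤ k ≤ n, let X be the set of the first k variables in the order π and Y = V \ X. Then f is computed by an (X, Y)-rectangle decision list of length at most w·(s−1) + 1. -/
/-- A complete OBDD of width (at most) `w` over variables `Fin n` with variable order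
`perm`, modeled as a layered branching program: state sets `S i` of cardinality at most
`w`, a start state, transition functions, and an accepting predicate on the last layer.
At layer `k` it reads the value of the variable `perm k`. -/
structure OBDD (n w : ℕ) where
  perm : Equiv.Perm (Fin n)
  S : Fin (n + 1) → Type
  finS : ∀ i, Fintype (S i)
  card_le : ∀ i, @Fintype.card (S i) (finS i) ≤ w
  start : S ⟨0, Nat.succ_pos n⟩
  trans : (k : ℕ) → (h : k < n) → S ⟨k, Nat.lt_succ_of_lt h⟩ → Bool →
    S ⟨k + 1, Nat.succ_lt_succ h⟩
  accept : S ⟨n, Nat.lt_succ_self n⟩ → Bool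

/-- The state reached after reading the first `k` variables of the order. -/
def OBDD.stateAt {n w : ℕ} (M : OBDD n w) (τ : Fin n → Bool) :
    (k : ℕ) → (h : k ≤ n) → M.S ⟨k, Nat.lt_succ_of_le h⟩
  | 0, _ => M.start
  | k + 1, h =>
    M.trans k (Nat.lt_of_succ_le h) (M.stateAt τ k (Nat.le_of_succ_le h))
      (τ (M.perm ⟨k, Nat.lt_of_succ_le h⟩))

/-- The function computed by the OBDD. -/
def OBDD.eval {n w : ℕ} (M : OBDD n w) (τ : Fin n → Bool) : Bool :=
  M.accept (M.stateAt τ n (Nat.le_refl n))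

/-- `R` is a combinatorial rectangle with partition `(X, V \ X)`: there are sets `A` of
assignments of `X` and `B` of assignments of `V \ X` such that `R = A × B`. -/
def IsRectangle {V : Type*} (X : Finset V) (R : Set (V → Bool)) : Prop :=
  ∃ (A : Set ({v : V // v ∈ X} → Bool)) (B : Set ({v : V // v ∉ X} → Bool)),
    ∀ τ : V → Bool,
      τ ∈ R ↔ ((fun v : {v : V // v ∈ X} => τ v) ∈ A ∧ (fun v : {v : V // v ∉ X} => τ v) ∈ B)

lemma OBDD.stateAt_congr_low {n w : ℕ} (M : OBDD n w) (τ τ' : Fin n → Bool) (k : ℕ)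
    (h : ∀ j : Fin n, (j : ℕ) < k → τ (M.perm j) = τ' (M.perm j)) :
    ∀ m, m ≤ k → (hn : m ≤ n) → M.stateAt τ m hn = M.stateAt τ' m hn := by
  intro m
  induction m with
  | zero => intro _ _; rfl
  | succ m ih =>
    intro hm hn
    have h2 : m < n := Nat.lt_of_succ_le hn
    simp only [OBDD.stateAt]
    rw [ih (Nat.le_of_succ_le hm) (Nat.le_of_succ_le hn),
      h ⟨m, h2⟩ (Nat.lt_of_lt_of_le (Nat.lt_succ_self m) hm)]

lemma OBDD.stateAt_congr_high {n w : ℕ} (M : OBDD n w) (τ τ' : Fin n → Bool) (k : ℕ)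
    (hk : k ≤ n)
    (hstate : M.stateAt τ k hk = M.stateAt τ' k hk)
    (h : ∀ j : Fin n, k ≤ (j : ℕ) → τ (M.perm j) = τ' (M.perm j)) :
    ∀ m, k ≤ m → (hn : m ≤ n) → M.stateAt τ m hn = M.stateAt τ' m hn := by
  intro m
  induction m with
  | zero => intro _ _; rfl
  | succ m ih =>
    intro hm hn
    rcases Nat.lt_or_ge m k with hlt | hge
    · have hkm : k = m + 1 := Nat.le_antisymm hm hlt
      subst hkm
      exact hstate
    · have h2 : m < n := Nat.lt_of_succ_le hn
      simp only [OBDD.stateAt]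
      rw [ih hge (Nat.le_of_succ_le hn), h ⟨m, h2⟩ hge]

lemma OBDD.eval_congr {n w : ℕ} (M : OBDD n w) (τ τ' : Fin n → Bool) (k : ℕ) (hk : k ≤ n)
    (hstate : M.stateAt τ k hk = M.stateAt τ' k hk)
    (h : ∀ j : Fin n, k ≤ (j : ℕ) → τ (M.perm j) = τ' (M.perm j)) :
    M.eval τ = M.eval τ' := by
  unfold OBDD.eval
  rw [M.stateAt_congr_high τ τ' k hk hstate h n hk (Nat.le_refl n)]

/-- If `f` is computed by a `(w, π)`-OBDD decision list `(L_1, c_1), …, (L_s, c_s)` (all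
`L_i` complete OBDDs of width at most `w` with the common variable order `π`, `L_s`
constantly true), and `X` is the set of the first `k` variables of `π`, then `f` is
computed by an `(X, V \ X)`-rectangle decision list of length at most `w·(s−1) + 1`. -/
theorem obdd_decision_list_to_rectangle_decision_list
    (n w k s : ℕ) (hk : k ≤ n) (hs : 0 < s)
    (π : Equiv.Perm (Fin n)) (M : Fin s → OBDD n w) (hord : ∀ i, (M i).perm = π)
    (c : Fin s → Bool)
    (hlast : ∀ τ, (M ⟨s - 1, Nat.sub_lt hs Nat.one_pos⟩).eval τ = true)
    (f : (Fin n → Bool) → Bool)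
    (hf : ∀ τ (i : Fin s), (M i).eval τ = true →
      (∀ j, j < i → (M j).eval τ = false) → f τ = c i) :
    ∃ s' : ℕ, 0 < s' ∧ s' ≤ w * (s - 1) + 1 ∧
      ∃ (R : Fin s' → Set (Fin n → Bool)) (c' : Fin s' → Bool),
        (∀ i, IsRectangle (Finset.univ.filter fun v : Fin n => ((π.symm v : ℕ) < k)) (R i)) ∧
        (∀ h : 0 < s', R ⟨s' - 1, Nat.sub_lt h Nat.one_pos⟩ = Set.univ) ∧
        (∀ τ (i : Fin s'), τ ∈ R i → (∀ j, j < i → τ ∉ R j) → f τ = c' i) := by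
  classical
  set X : Finset (Fin n) := Finset.univ.filter (fun v : Fin n => ((π.symm v : ℕ) < k)) with hX
  have hmemX : ∀ j : Fin n, π j ∈ X ↔ (j : ℕ) < k := by
    intro j
    simp [hX]
  -- width is positive
  have hw : 0 < w := by
    have h1 := (M ⟨0, hs⟩).card_le ⟨0, Nat.succ_pos n⟩
    have h2 : 0 < @Fintype.card _ ((M ⟨0, hs⟩).finS ⟨0, Nat.succ_pos n⟩) :=
      @Fintype.card_pos _ ((M ⟨0, hs⟩).finS _) ⟨(M ⟨0, hs⟩).start⟩
    omega
  -- surjections from Fin w onto the layer-k states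
  have hgex : ∀ i : Fin s, ∃ g : Fin w → (M i).S ⟨k, Nat.lt_succ_of_le hk⟩,
      Function.Surjective g := by
    intro i
    letI : Fintype ((M i).S ⟨k, Nat.lt_succ_of_le hk⟩) := (M i).finS _
    have hcard : Fintype.card ((M i).S ⟨k, Nat.lt_succ_of_le hk⟩) ≤ w := (M i).card_le _
    have hpos : 0 < Fintype.card ((M i).S ⟨k, Nat.lt_succ_of_le hk⟩) :=
      Fintype.card_pos_iff.mpr ⟨(M i).stateAt (fun _ => false) k hk⟩
    let e := Fintype.equivFin ((M i).S ⟨k, Nat.lt_succ_of_le hk⟩)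
    refine ⟨fun a => e.symm ⟨(a : ℕ) % _, Nat.mod_lt _ hpos⟩, fun x => ?_⟩
    refine ⟨⟨((e x : ℕ)), lt_of_lt_of_le (e x).isLt hcard⟩, ?_⟩
    have hmk : (⟨(e x : ℕ) % Fintype.card ((M i).S ⟨k, Nat.lt_succ_of_le hk⟩),
        Nat.mod_lt _ hpos⟩ : Fin (Fintype.card ((M i).S ⟨k, Nat.lt_succ_of_le hk⟩))) = e x :=
      Fin.ext (Nat.mod_eq_of_lt (e x).isLt)
    simp [hmk]
  choose g hg using hgex
  -- state at layer k depends only on X-variables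
  have hlow : ∀ (i : Fin s) (τ τ' : Fin n → Bool), (∀ v : Fin n, v ∈ X → τ v = τ' v) →
      (M i).stateAt τ k hk = (M i).stateAt τ' k hk := by
    intro i τ τ' hagree
    refine (M i).stateAt_congr_low τ τ' k ?_ k (le_refl k) hk
    intro j hj
    rw [hord i]
    exact hagree (π j) ((hmemX j).mpr hj)
  -- given equal states at layer k and agreement off X, evals agree
  have hhigh : ∀ (i : Fin s) (τ τ' : Fin n → Bool),
      (M i).stateAt τ k hk = (M i).stateAt τ' k hk →
      (∀ v : Fin n, v ∉ X → τ v = τ' v) →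
      (M i).eval τ = (M i).eval τ' := by
    intro i τ τ' hst hagree
    refine (M i).eval_congr τ τ' k hk hst ?_
    intro j hj
    rw [hord i]
    refine hagree (π j) ?_
    intro hmem
    have := (hmemX j).mp hmem
    omega
  -- each state set {τ | stateAt = q ∧ eval = true} is a rectangle
  have hrect : ∀ (i : Fin s) (q : (M i).S ⟨k, Nat.lt_succ_of_le hk⟩),
      IsRectangle X {τ | (M i).stateAt τ k hk = q ∧ (M i).eval τ = true} := by
    intro i q
    by_cases hreach : ∃ σ : ({v : Fin n // v ∈ X} → Bool),
        (M i).stateAt (fun v => if h : v ∈ X then σ ⟨v, h⟩ else false) k hk = q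
    · obtain ⟨σ0, hσ0⟩ := hreach
      refine ⟨{σ | (M i).stateAt (fun v => if h : v ∈ X then σ ⟨v, h⟩ else false) k hk = q},
              {ρ | (M i).eval (fun v => if h : v ∈ X then σ0 ⟨v, h⟩ else ρ ⟨v, h⟩) = true}, ?_⟩
      intro τ
      have hA : (M i).stateAt
          (fun v => if h : v ∈ X then (fun u : {v : Fin n // v ∈ X} => τ u) ⟨v, h⟩ else false)
          k hk = (M i).stateAt τ k hk := by
        apply hlow i
        intro v hv
        simp [hv]
      have hGst : (M i).stateAt
          (fun v => if h : v ∈ X then σ0 ⟨v, h⟩ else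
            (fun u : {v : Fin n // v ∉ X} => τ u) ⟨v, h⟩) k hk = q := by
        rw [← hσ0]
        apply hlow i
        intro v hv
        simp [hv]
      have hGagree : ∀ v : Fin n, v ∉ X →
          (fun v => if h : v ∈ X then σ0 ⟨v, h⟩ else
            (fun u : {v : Fin n // v ∉ X} => τ u) ⟨v, h⟩) v = τ v := by
        intro v hv
        simp [hv]
      constructor
      · rintro ⟨hst, hev⟩
        refine ⟨?_, ?_⟩
        · show (M i).stateAt _ k hk = q
          rw [hA]
          exact hst
        · show (M i).eval _ = true
          rw [hhigh i _ τ (by rw [hGst, hst]) hGagree]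
          exact hev
      · rintro ⟨hAτ, hB⟩
        have hst : (M i).stateAt τ k hk = q := by rw [← hA]; exact hAτ
        refine ⟨hst, ?_⟩
        rw [← hhigh i _ τ (by rw [hGst, hst]) hGagree]
        exact hB
    · refine ⟨∅, Set.univ, ?_⟩
      intro τ
      simp only [Set.mem_setOf_eq, Set.mem_empty_iff_false, false_and, iff_false]
      rintro ⟨hst, _⟩
      exact hreach ⟨fun u => τ u, by
        rw [hlow i _ τ (by intro v hv; simp [hv])]
        exact hst⟩
  -- block index bound
  have hdiv : ∀ j : ℕ, j < w * (s - 1) → j / w < s - 1 := by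
    intro j hj
    exact (Nat.div_lt_iff_lt_mul hw).mpr (by rwa [Nat.mul_comm] at hj)
  have hb : ∀ j : ℕ, j < w * (s - 1) → j / w < s := fun j hj =>
    lt_of_lt_of_le (hdiv j hj) (Nat.sub_le s 1)
  -- the rectangle list
  obtain ⟨R, hRdef⟩ : ∃ R : Fin (w * (s - 1) + 1) → Set (Fin n → Bool),
      ∀ j, R j = if h : (j : ℕ) < w * (s - 1) then
          {τ | (M ⟨(j : ℕ) / w, hb _ h⟩).stateAt τ k hk
              = g ⟨(j : ℕ) / w, hb _ h⟩ ⟨(j : ℕ) % w, Nat.mod_lt _ hw⟩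
            ∧ (M ⟨(j : ℕ) / w, hb _ h⟩).eval τ = true}
        else Set.univ := ⟨_, fun _ => rfl⟩
  obtain ⟨c', hc'def⟩ : ∃ c' : Fin (w * (s - 1) + 1) → Bool,
      ∀ j, c' j = if h : (j : ℕ) < w * (s - 1) then c ⟨(j : ℕ) / w, hb _ h⟩
        else c ⟨s - 1, Nat.sub_lt hs Nat.one_pos⟩ := ⟨_, fun _ => rfl⟩
  -- membership helper
  have hmemR : ∀ (jj : Fin s) (a : Fin w) (τ : Fin n → Bool)
      (hlt : (jj : ℕ) * w + (a : ℕ) < w * (s - 1)),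
      (M jj).stateAt τ k hk = g jj a → (M jj).eval τ = true →
      τ ∈ R ⟨(jj : ℕ) * w + (a : ℕ), Nat.lt_succ_of_lt hlt⟩ := by
    intro jj a τ hlt hst hev
    rw [hRdef, dif_pos hlt]
    have ediv : ((jj : ℕ) * w + (a : ℕ)) / w = (jj : ℕ) := by
      rw [Nat.mul_comm, Nat.mul_add_div hw, Nat.div_eq_of_lt a.isLt, Nat.add_zero]
    have emod : ((jj : ℕ) * w + (a : ℕ)) % w = (a : ℕ) := by
      rw [Nat.mul_comm, Nat.mul_add_mod, Nat.mod_eq_of_lt a.isLt]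
    have hI : (⟨((jj : ℕ) * w + (a : ℕ)) / w, hb _ hlt⟩ : Fin s) = jj := Fin.ext ediv
    have hAeq : (⟨((jj : ℕ) * w + (a : ℕ)) % w, Nat.mod_lt _ hw⟩ : Fin w) = a := Fin.ext emod
    rw [Set.mem_setOf_eq, hI, hAeq]
    exact ⟨hst, hev⟩
  refine ⟨w * (s - 1) + 1, Nat.succ_pos _, le_refl _, R, c', ?_, ?_, ?_⟩
  · -- rectangles
    intro j
    rw [hRdef]
    by_cases h : (j : ℕ) < w * (s - 1)
    · rw [dif_pos h]
      exact hrect _ _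
    · rw [dif_neg h]
      exact ⟨Set.univ, Set.univ, by simp⟩
  · -- last rectangle is everything
    intro _
    rw [hRdef, dif_neg (by simp)]
  · -- decision-list correctness
    intro τ i hi hprev
    by_cases h : (i : ℕ) < w * (s - 1)
    · rw [hRdef, dif_pos h] at hi
      obtain ⟨hst, hev⟩ := hi
      rw [hc'def, dif_pos h]
      apply hf τ ⟨(i : ℕ) / w, hb _ h⟩ hev
      intro jj hjj
      by_contra hne
      have hevj : (M jj).eval τ = true := by
        cases hbv : (M jj).eval τ with
        | false => exact absurd hbv hne
        | true => rfl
      obtain ⟨a, ha⟩ := hg jj ((M jj).stateAt τ k hk)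
      have hjjv : (jj : ℕ) < (i : ℕ) / w := hjj
      have e1 : ((jj : ℕ) + 1) * w = (jj : ℕ) * w + w := by ring
      have h1 : ((jj : ℕ) + 1) * w ≤ ((i : ℕ) / w) * w :=
        Nat.mul_le_mul_right _ (by omega)
      have e2 : ((i : ℕ) / w) * w = w * ((i : ℕ) / w) := Nat.mul_comm _ _
      have e3 : w * ((i : ℕ) / w) + (i : ℕ) % w = (i : ℕ) := Nat.div_add_mod _ _
      have e4 : ((s : ℕ) - 1) * w = w * (s - 1) := Nat.mul_comm _ _
      have h2 : ((i : ℕ) / w) * w ≤ ((s - 1)) * w :=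
        Nat.mul_le_mul_right _ (le_of_lt (hdiv _ h))
      have hlt1 : (jj : ℕ) * w + (a : ℕ) < w * (s - 1) := by
        calc (jj : ℕ) * w + (a : ℕ) < (jj : ℕ) * w + w := Nat.add_lt_add_left a.isLt _
          _ = ((jj : ℕ) + 1) * w := e1.symm
          _ ≤ ((i : ℕ) / w) * w := h1
          _ ≤ (s - 1) * w := h2
          _ = w * (s - 1) := e4
      have hltI : (jj : ℕ) * w + (a : ℕ) < (i : ℕ) := by
        calc (jj : ℕ) * w + (a : ℕ) < (jj : ℕ) * w + w := Nat.add_lt_add_left a.isLt _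
          _ = ((jj : ℕ) + 1) * w := e1.symm
          _ ≤ ((i : ℕ) / w) * w := h1
          _ = w * ((i : ℕ) / w) := e2
          _ ≤ w * ((i : ℕ) / w) + (i : ℕ) % w := Nat.le_add_right _ _
          _ = (i : ℕ) := e3
      exact hprev ⟨(jj : ℕ) * w + (a : ℕ), Nat.lt_succ_of_lt hlt1⟩ hltI
        (hmemR jj a τ hlt1 ha.symm hevj)
    · rw [hc'def, dif_neg h]
      apply hf τ ⟨s - 1, Nat.sub_lt hs Nat.one_pos⟩ (hlast τ)
      intro jj hjj
      by_contra hne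
      have hevj : (M jj).eval τ = true := by
        cases hbv : (M jj).eval τ with
        | false => exact absurd hbv hne
        | true => rfl
      obtain ⟨a, ha⟩ := hg jj ((M jj).stateAt τ k hk)
      have hjjv : (jj : ℕ) < s - 1 := hjj
      have e1 : ((jj : ℕ) + 1) * w = (jj : ℕ) * w + w := by ring
      have h1 : ((jj : ℕ) + 1) * w ≤ (s - 1) * w :=
        Nat.mul_le_mul_right _ (by omega)
      have e4 : ((s : ℕ) - 1) * w = w * (s - 1) := Nat.mul_comm _ _
      have hlt1 : (jj : ℕ) * w + (a : ℕ) < w * (s - 1) := by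
        calc (jj : ℕ) * w + (a : ℕ) < (jj : ℕ) * w + w := Nat.add_lt_add_left a.isLt _
          _ = ((jj : ℕ) + 1) * w := e1.symm
          _ ≤ (s - 1) * w := h1
          _ = w * (s - 1) := e4
      have hge : w * (s - 1) ≤ (i : ℕ) := Nat.le_of_not_lt h
      have hltI : (jj : ℕ) * w + (a : ℕ) < (i : ℕ) := lt_of_lt_of_le hlt1 hge
      exact hprev ⟨(jj : ℕ) * w + (a : ℕ), Nat.lt_succ_of_lt hlt1⟩ hltI
        (hmemR jj a τ hlt1 ha.symm hevj)
end
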